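/- If transition systems T and T' are communication finite-branching with respect to a communication function γ, then the encapsulated parallel composition δ_{H_γ}(T ∥ T') is finite-branching. -/
import Mathlib


structure TS (S A : Type*) where
  trans : S → A → S → Prop
  term : S → Prop
  init : S

def Cgamma {A : Type*} (γ : A → A → Option A) : Set A :=
  {c | ∃ a b, γ a b = some c}

def ParTrans {S S' A : Type*} (T : TS S A) (T' : TS S' A) (γ : A → A → Option A) :
    S × S' → A → S × S' → Prop := fun p c q =>
  (T.trans p.1 c q.1 ∧ p.2 = q.2) ∨
  (T'.trans p.2 c q.2 ∧ p.1 = q.1) ∨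
  (∃ a b, γ a b = some c ∧ T.trans p.1 a q.1 ∧ T'.trans p.2 b q.2)

def EncTrans {S S' A : Type*} (T : TS S A) (T' : TS S' A) (γ : A → A → Option A) :
    S × S' → A → S × S' → Prop := fun p c q =>
  ParTrans T T' γ p c q ∧ c ∈ Cgamma γ

/-- If `T` and `T'` are communication finite-branching with respect to `γ`,
then `δ_{H_γ}(T ∥ T')` is finite-branching. -/
theorem encapsulated_parallel_finiteBranching {S S' A : Type*}
    (T : TS S A) (T' : TS S' A) (γ : A → A → Option A)
    (hγsym : ∀ a b, γ a b = γ b a)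
    (hTlab : ∀ (s : S) (a : A) (t : S), T.trans s a t → a ∉ Cgamma γ)
    (hT'lab : ∀ (s' : S') (a : A) (t' : S'), T'.trans s' a t' → a ∉ Cgamma γ)
    (hcfb : ∀ (s : S) (s' : S'),
      {x : (A × S) × (A × S') |
        T.trans s x.1.1 x.1.2 ∧ T'.trans s' x.2.1 x.2.2 ∧ (γ x.1.1 x.2.1).isSome}.Finite) :
    ∀ p : S × S', {q : A × (S × S') | EncTrans T T' γ p q.1 q.2}.Finite := by
  intro p
  have key := (hcfb p.1 p.2).image
    (fun x : (A × S) × (A × S') => ((γ x.1.1 x.2.1).getD x.1.1, (x.1.2, x.2.2)))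
  refine key.subset ?_
  rintro ⟨c, t, t'⟩ ⟨hpar, hc⟩
  rcases hpar with ⟨h1, _⟩ | ⟨h2, _⟩ | ⟨a, b, hab, h1, h2⟩
  · exact absurd hc (hTlab _ _ _ h1)
  · exact absurd hc (hT'lab _ _ _ h2)
  · exact ⟨((a, t), (b, t')), ⟨h1, h2, by simp [hab]⟩, by simp [hab]⟩
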